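/- Correctness of project-join tree evaluation: for a CNF formula φ over X, a project-join tree (T, r, γ, π) of φ, and a literal-weight function W over X, the root valuation evaluated at the empty assignment equals the weighted model count: f^W_r(∅) = W(φ) = Σ_{τ ⊆ X} φ(τ)·W(τ). -/

import Mathlib

variable {V : Type*} [DecidableEq V]

structure Clause (V : Type*) where
  pos : Finset V
  neg : Finset V

def Clause.vars [DecidableEq V] (c : Clause V) : Finset V := c.pos ∪ c.neg

noncomputable def Clause.ind [DecidableEq V] (c : Clause V) (τ : Finset V) : ℝ :=
  if (∃ x ∈ c.pos, x ∈ τ) ∨ (∃ x ∈ c.neg, x ∉ τ) then 1 else 0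

inductive PJT (V : Type*) where
  | leaf (c : Clause V)
  | node (lbl : Finset V) (children : List (PJT V))

namespace PJT

def clauses : PJT V → Multiset (Clause V)
  | .leaf c => {c}
  | .node _ cs => (cs.attach.map (fun o => clauses o.1)).sum
decreasing_by
  have := List.sizeOf_lt_of_mem o.2
  simp only [PJT.node.sizeOf_spec]
  omega

def labels : PJT V → Multiset (Finset V)
  | .leaf _ => 0
  | .node lbl cs => lbl ::ₘ (cs.attach.map (fun o => labels o.1)).sum
decreasing_by
  have := List.sizeOf_lt_of_mem o.2
  simp only [PJT.node.sizeOf_spec]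
  omega

def P : PJT V → Finset V
  | .leaf _ => ∅
  | .node lbl cs => lbl ∪ (cs.attach.map (fun o => P o.1)).foldr (· ∪ ·) ∅
decreasing_by
  have := List.sizeOf_lt_of_mem o.2
  simp only [PJT.node.sizeOf_spec]
  omega

def varsOf : PJT V → Finset V
  | .leaf c => c.vars
  | .node lbl cs => (cs.attach.map (fun o => varsOf o.1)).foldr (· ∪ ·) ∅ \ lbl
decreasing_by
  have := List.sizeOf_lt_of_mem o.2
  simp only [PJT.node.sizeOf_spec]
  omega

def size : PJT V → ℕ
  | .leaf c => c.vars.card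
  | .node lbl cs => (varsOf (.node lbl cs) ∪ lbl).card

def width : PJT V → ℕ
  | .leaf c => c.vars.card
  | .node lbl cs =>
      max (size (.node lbl cs)) ((cs.attach.map (fun o => width o.1)).foldr max 0)
decreasing_by
  have := List.sizeOf_lt_of_mem o.2
  simp only [PJT.node.sizeOf_spec]
  omega

def wProd (W : V → Bool → ℝ) (S : Finset V) (τ : Finset V) : ℝ :=
  ∏ x ∈ S, W x (decide (x ∈ τ))

noncomputable def val (W : V → Bool → ℝ) : PJT V → Finset V → ℝ
  | .leaf c => c.ind
  | .node lbl cs => fun τ =>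
      ∑ σ ∈ lbl.powerset,
        (cs.attach.map (fun o => val W o.1 ((τ ∪ σ) ∩ varsOf o.1))).prod
          * wProd W lbl (τ ∪ σ)
decreasing_by
  have := List.sizeOf_lt_of_mem o.2
  simp only [PJT.node.sizeOf_spec]
  omega

inductive Subtree : PJT V → PJT V → Prop
  | refl (t : PJT V) : Subtree t t
  | child {s c : PJT V} {lbl : Finset V} {cs : List (PJT V)} :
      c ∈ cs → Subtree s c → Subtree s (.node lbl cs)

end PJT

def Formula.vars (φ : Finset (Clause V)) : Finset V := φ.sup Clause.vars

def clausesVars (M : Multiset (Clause V)) : Finset V := (M.map Clause.vars).sup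

structure IsPJT (φ : Finset (Clause V)) (t : PJT V) : Prop where
  clauses_eq : t.clauses = φ.val
  cover : t.P = Formula.vars φ
  disjoint_labels : (t.labels.map Finset.card).sum = (Formula.vars φ).card
  descend : ∀ lbl cs, PJT.Subtree (.node lbl cs) t →
    ∀ c ∈ φ, ∀ x ∈ lbl, x ∈ c.vars → c ∈ PJT.clauses (.node lbl cs)

/-!
Every node `n` evaluates to the projection `∃_{P n}` of the product of the clauses below `n`,
weighted by `W` on `P n`, the set of variables projected at or below `n`. The induction step
needs the label and the children's projected sets to be pairwise disjoint (the label sizes add up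
to `|vars φ|`), and a clause below one child to mention no variable projected below another.
Then the product of the children's projections is the projection of their product, and
projecting the label on top is a Fubini step over the powerset of a disjoint union. At the root
the projected set is `vars φ` and the assignment is empty.
-/

theorem Finset.mem_foldr_union_map {α : Type*} (l : List α) (f : α → Finset V) {x : V} :
    x ∈ (l.map f).foldr (· ∪ ·) ∅ ↔ ∃ a ∈ l, x ∈ f a := by
  induction l with
  | nil => simp
  | cons a l ih => simp [ih]

theorem Finset.disjoint_foldr_union_map_right {α : Type*} (l : List α) (f : α → Finset V)
    {s : Finset V} :
    Disjoint s ((l.map f).foldr (· ∪ ·) ∅) ↔ ∀ a ∈ l, Disjoint s (f a) := by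
  induction l with
  | nil => simp
  | cons a l ih => simp [ih, Finset.disjoint_union_right]

theorem Multiset.mem_sum_map_list {α β : Type*} (l : List α) (f : α → Multiset β) {b : β} :
    b ∈ (l.map f).sum ↔ ∃ a ∈ l, b ∈ f a := by
  induction l with
  | nil => simp
  | cons a l ih => simp [ih]

theorem Multiset.mem_sup_iff_exists_mem {M : Multiset (Finset V)} {x : V} :
    x ∈ M.sup ↔ ∃ A ∈ M, x ∈ A := by
  induction M using Multiset.induction with
  | empty => simp
  | cons A M ih => simp [ih]

theorem Multiset.card_sup_le_sum_card (M : Multiset (Finset V)) :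
    M.sup.card ≤ (M.map Finset.card).sum := by
  induction M using Multiset.induction with
  | empty => simp
  | cons A M ih =>
    simpa using (Finset.card_union_le A M.sup).trans (Nat.add_le_add_left ih _)

theorem Multiset.disjoint_sup_of_sum_card_le {M A B : Multiset (Finset V)}
    (hM : (M.map Finset.card).sum ≤ M.sup.card) (hAB : A + B ≤ M) : Disjoint A.sup B.sup := by
  obtain ⟨R, rfl⟩ := Multiset.le_iff_exists_add.1 hAB
  have hA := A.card_sup_le_sum_card
  have hB := B.card_sup_le_sum_card
  have hR := R.card_sup_le_sum_card
  have hunion := Finset.card_union_le (A.sup ∪ B.sup) R.sup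
  have hinter := Finset.card_union_add_card_inter A.sup B.sup
  simp only [Multiset.map_add, Multiset.sum_add, Multiset.sup_add, Finset.sup_eq_union] at hM
  rw [Finset.disjoint_iff_inter_eq_empty, ← Finset.card_eq_zero]
  omega

theorem Multiset.sum_map_add_le_of_sublist {α β : Type*} {l : List α} (f : α → Multiset β)
    {a b : α} (h : [a, b].Sublist l) : f a + f b ≤ (l.map f).sum := by
  simpa using (h.map f).sum_le_sum (fun _ _ => zero_le _)

theorem Finset.sum_powerset_union {M : Type*} [AddCommMonoid M] {X Y : Finset V}
    (h : Disjoint X Y) (f : Finset V → M) :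
    ∑ π ∈ (X ∪ Y).powerset, f π
      = ∑ σ ∈ X.powerset, ∑ ρ ∈ Y.powerset, f (σ ∪ ρ) := by
  rw [← Finset.sum_product']
  refine Finset.sum_nbij' (fun π => (π ∩ X, π ∩ Y)) (fun p => p.1 ∪ p.2) ?_ ?_ ?_ ?_ ?_
  · intro π _
    simp
  · intro p hp
    simp only [Finset.mem_product, Finset.mem_powerset] at hp ⊢
    exact Finset.union_subset_union hp.1 hp.2
  · intro π hπ
    rw [← Finset.inter_union_distrib_left, Finset.inter_eq_left.2 (Finset.mem_powerset.1 hπ)]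
  · rintro ⟨σ, ρ⟩ hp
    simp only [Finset.mem_product, Finset.mem_powerset] at hp
    simp only [Finset.union_inter_distrib_right, Finset.inter_eq_left.2 hp.1,
      Finset.inter_eq_left.2 hp.2, Finset.disjoint_iff_inter_eq_empty.1 (h.mono_left hp.1),
      Finset.disjoint_iff_inter_eq_empty.1 (h.symm.mono_left hp.2), Finset.union_empty,
      Finset.empty_union]
  · intro π hπ
    rw [← Finset.inter_union_distrib_left, Finset.inter_eq_left.2 (Finset.mem_powerset.1 hπ)]

theorem Clause.ind_congr {c : Clause V} {τ₁ τ₂ : Finset V}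
    (h : ∀ x ∈ c.vars, x ∈ τ₁ ↔ x ∈ τ₂) : c.ind τ₁ = c.ind τ₂ := by
  have hpos : ∀ x ∈ c.pos, x ∈ τ₁ ↔ x ∈ τ₂ :=
    fun x hx => h x (Finset.mem_union_left _ hx)
  have hneg : ∀ x ∈ c.neg, x ∈ τ₁ ↔ x ∈ τ₂ :=
    fun x hx => h x (Finset.mem_union_right _ hx)
  unfold Clause.ind
  congr 1
  exact propext (or_congr (exists_congr fun x => and_congr_right (hpos x))
    (exists_congr fun x => and_congr_right fun hx => (hneg x hx).not))

namespace PJT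

section Structure

omit [DecidableEq V]

@[elab_as_elim]
theorem induction {motive : PJT V → Prop} (leaf : ∀ c, motive (.leaf c))
    (node : ∀ lbl cs, (∀ o ∈ cs, motive o) → motive (.node lbl cs)) : ∀ t, motive t
  | .leaf c => leaf c
  | .node lbl cs => node lbl cs fun o _ => induction leaf node o

variable {lbl : Finset V} {cs : List (PJT V)}

theorem clauses_leaf (c : Clause V) : clauses (.leaf c) = {c} := by
  rw [clauses]

theorem clauses_node : clauses (.node lbl cs) = (cs.map clauses).sum := by
  rw [clauses, List.attach_map_val]

theorem labels_leaf (c : Clause V) : labels (.leaf c) = 0 := by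
  rw [labels]

theorem labels_node : labels (.node lbl cs) = lbl ::ₘ (cs.map labels).sum := by
  rw [labels, List.attach_map_val]

theorem Subtree.trans {r s t : PJT V} (hrs : Subtree r s) (hst : Subtree s t) : Subtree r t := by
  induction hst with
  | refl => exact hrs
  | child hmem _ ih => exact .child hmem ih

theorem Subtree.of_mem {o : PJT V} (ho : o ∈ cs) : Subtree o (.node lbl cs) :=
  .child ho (.refl o)

theorem Subtree.clauses_le {s t : PJT V} (h : Subtree s t) : clauses s ≤ clauses t := by
  induction h with
  | refl => exact le_rfl
  | child hmem _ ih =>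
    rw [clauses_node]
    exact ih.trans (List.le_sum_of_mem (List.mem_map_of_mem hmem))

theorem Subtree.labels_le {s t : PJT V} (h : Subtree s t) : labels s ≤ labels t := by
  induction h with
  | refl => exact le_rfl
  | child hmem _ ih =>
    rw [labels_node]
    exact ih.trans ((List.le_sum_of_mem (List.mem_map_of_mem hmem)).trans
      (Multiset.le_cons_self _ _))

end Structure

variable {lbl : Finset V} {cs : List (PJT V)}

theorem P_leaf (c : Clause V) : P (.leaf c) = ∅ := by
  rw [P]

theorem P_node : P (.node lbl cs) = lbl ∪ (cs.map P).foldr (· ∪ ·) ∅ := by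
  rw [P, List.attach_map_val]

theorem varsOf_leaf (c : Clause V) : varsOf (.leaf c) = c.vars := by
  rw [varsOf]

theorem varsOf_node : varsOf (.node lbl cs) = (cs.map varsOf).foldr (· ∪ ·) ∅ \ lbl := by
  rw [varsOf, List.attach_map_val]

theorem val_leaf (W : V → Bool → ℝ) (c : Clause V) : val W (.leaf c) = c.ind := by
  rw [val]

theorem val_node (W : V → Bool → ℝ) (τ : Finset V) :
    val W (.node lbl cs) τ = ∑ σ ∈ lbl.powerset,
      (cs.map fun o => val W o ((τ ∪ σ) ∩ varsOf o)).prod * wProd W lbl (τ ∪ σ) := by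
  rw [val]
  exact Finset.sum_congr rfl fun σ _ => by
    rw [List.attach_map_val (f := fun o => val W o ((τ ∪ σ) ∩ varsOf o))]

theorem P_subset_of_mem {o : PJT V} (ho : o ∈ cs) : P o ⊆ P (.node lbl cs) := by
  intro x hx
  rw [P_node, Finset.mem_union, Finset.mem_foldr_union_map]
  exact Or.inr ⟨o, ho, hx⟩

theorem vars_subset_varsOf_union_P {s : PJT V} {c : Clause V} (hc : c ∈ clauses s) :
    c.vars ⊆ varsOf s ∪ P s := by
  induction s using PJT.induction with
  | leaf c' =>
    rw [clauses_leaf, Multiset.mem_singleton] at hc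
    rw [hc, varsOf_leaf]
    exact Finset.subset_union_left
  | node lbl cs ih =>
    rw [clauses_node, Multiset.mem_sum_map_list] at hc
    obtain ⟨o, ho, hco⟩ := hc
    intro x hx
    have hxo := ih o ho hco hx
    rw [varsOf_node, P_node]
    simp only [Finset.mem_union, Finset.mem_sdiff, Finset.mem_foldr_union_map] at hxo ⊢
    by_cases hxl : x ∈ lbl
    · exact Or.inr (Or.inl hxl)
    · rcases hxo with hxo | hxo
      · exact Or.inl ⟨⟨o, ho, hxo⟩, hxl⟩
      · exact Or.inr (Or.inr ⟨o, ho, hxo⟩)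

theorem exists_subtree_of_mem_P {s : PJT V} {x : V} (hx : x ∈ P s) :
    ∃ lbl cs, Subtree (.node lbl cs) s ∧ x ∈ lbl := by
  induction s using PJT.induction with
  | leaf c => simp [P_leaf] at hx
  | node lbl cs ih =>
    rw [P_node, Finset.mem_union, Finset.mem_foldr_union_map] at hx
    rcases hx with hx | ⟨o, ho, hxo⟩
    · exact ⟨lbl, cs, .refl _, hx⟩
    · obtain ⟨lbl', cs', hsub, hx'⟩ := ih o ho hxo
      exact ⟨lbl', cs', hsub.trans (.of_mem ho), hx'⟩

theorem P_eq_sup_labels (s : PJT V) : P s = (labels s).sup := by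
  induction s using PJT.induction with
  | leaf c => simp [P_leaf, labels_leaf]
  | node lbl cs ih =>
    ext x
    simp only [P_node, labels_node, Multiset.sup_cons, Finset.sup_eq_union, Finset.mem_union,
      Finset.mem_foldr_union_map, Multiset.mem_sup_iff_exists_mem, Multiset.mem_sum_map_list]
    refine or_congr_right ⟨fun ⟨o, ho, hx⟩ => ?_, fun ⟨A, ⟨o, ho, hA⟩, hx⟩ => ?_⟩
    · obtain ⟨A, hA, hxA⟩ := Multiset.mem_sup_iff_exists_mem.1 (ih o ho ▸ hx)
      exact ⟨A, ⟨o, ho, hA⟩, hxA⟩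
    · exact ⟨o, ho, ih o ho ▸ Multiset.mem_sup_iff_exists_mem.2 ⟨A, hA, hx⟩⟩

section WeightedCount

variable (W : V → Bool → ℝ)

theorem wProd_union {S T : Finset V} (h : Disjoint S T) (τ : Finset V) :
    wProd W (S ∪ T) τ = wProd W S τ * wProd W T τ :=
  Finset.prod_union h

theorem wProd_union_of_disjoint_left {S τ : Finset V} (h : Disjoint τ S) (σ : Finset V) :
    wProd W S (τ ∪ σ) = wProd W S σ :=
  Finset.prod_congr rfl fun x hx => by simp [Finset.disjoint_right.1 h hx]

theorem wProd_union_of_disjoint_right {S ρ : Finset V} (h : Disjoint ρ S) (σ : Finset V) :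
    wProd W S (σ ∪ ρ) = wProd W S σ := by
  rw [Finset.union_comm, wProd_union_of_disjoint_left W h]

/-- The paper's `∃_X (∏_{c ∈ M} c · ∏_{x ∈ X} W_x)`, evaluated at the assignment `τ`. -/
noncomputable def weightedCount (M : Multiset (Clause V)) (X τ : Finset V) : ℝ :=
  ∑ σ ∈ X.powerset, (M.map fun c => c.ind (τ ∪ σ)).prod * wProd W X σ

variable {W}

theorem weightedCount_congr {M : Multiset (Clause V)} {X τ₁ τ₂ : Finset V}
    (h : ∀ c ∈ M, ∀ x ∈ c.vars, x ∈ τ₁ ↔ x ∈ τ₂) :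
    weightedCount W M X τ₁ = weightedCount W M X τ₂ := by
  refine Finset.sum_congr rfl fun σ _ => ?_
  congr 2
  refine Multiset.map_congr rfl fun c hc => Clause.ind_congr fun x hx => ?_
  simp only [Finset.mem_union, h c hc x hx]

theorem weightedCount_singleton_empty (c : Clause V) (τ : Finset V) :
    weightedCount W {c} ∅ τ = c.ind τ := by
  simp [weightedCount, wProd]

theorem weightedCount_zero_empty (τ : Finset V) : weightedCount W 0 ∅ τ = 1 := by
  simp [weightedCount, wProd]

theorem weightedCount_union {M : Multiset (Clause V)} {X Y : Finset V} (h : Disjoint X Y)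
    (τ : Finset V) : weightedCount W M (X ∪ Y) τ =
      ∑ σ ∈ X.powerset, weightedCount W M Y (τ ∪ σ) * wProd W X σ := by
  rw [weightedCount, Finset.sum_powerset_union h]
  refine Finset.sum_congr rfl fun σ hσ => ?_
  rw [weightedCount, Finset.sum_mul]
  refine Finset.sum_congr rfl fun ρ hρ => ?_
  rw [wProd_union W h, wProd_union_of_disjoint_right W (h.symm.mono_left
      (Finset.mem_powerset.1 hρ)), wProd_union_of_disjoint_left W (h.mono_left
      (Finset.mem_powerset.1 hσ)), Finset.union_assoc]
  ring

theorem weightedCount_mul {M₁ M₂ : Multiset (Clause V)} {X₁ X₂ : Finset V}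
    (hX : Disjoint X₁ X₂) (h₁ : ∀ c ∈ M₁, Disjoint c.vars X₂)
    (h₂ : ∀ c ∈ M₂, Disjoint c.vars X₁) (τ : Finset V) :
    weightedCount W M₁ X₁ τ * weightedCount W M₂ X₂ τ
      = weightedCount W (M₁ + M₂) (X₁ ∪ X₂) τ := by
  rw [weightedCount, weightedCount, weightedCount, Finset.sum_mul_sum,
    Finset.sum_powerset_union hX]
  refine Finset.sum_congr rfl fun σ₁ hσ₁ => Finset.sum_congr rfl fun σ₂ hσ₂ => ?_
  rw [Finset.mem_powerset] at hσ₁ hσ₂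
  have hM₁ : (M₁.map fun c => c.ind (τ ∪ (σ₁ ∪ σ₂))).prod
      = (M₁.map fun c => c.ind (τ ∪ σ₁)).prod := by
    refine congrArg _ (Multiset.map_congr rfl fun c hc => Clause.ind_congr fun x hx => ?_)
    simp [Finset.disjoint_left.1 ((h₁ c hc).mono_right hσ₂) hx]
  have hM₂ : (M₂.map fun c => c.ind (τ ∪ (σ₁ ∪ σ₂))).prod
      = (M₂.map fun c => c.ind (τ ∪ σ₂)).prod := by
    refine congrArg _ (Multiset.map_congr rfl fun c hc => Clause.ind_congr fun x hx => ?_)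
    simp [Finset.disjoint_left.1 ((h₂ c hc).mono_right hσ₁) hx]
  rw [Multiset.map_add, Multiset.prod_add, hM₁, hM₂, wProd_union W hX,
    wProd_union_of_disjoint_right W (hX.symm.mono_left hσ₂),
    wProd_union_of_disjoint_left W (hX.mono_left hσ₁)]
  ring

end WeightedCount

def Separated (a b : PJT V) : Prop :=
  Disjoint (P a) (P b) ∧ (∀ c ∈ clauses a, Disjoint c.vars (P b)) ∧
    ∀ c ∈ clauses b, Disjoint c.vars (P a)

structure SeparatedNode (lbl : Finset V) (cs : List (PJT V)) : Prop where
  disjoint_label : ∀ o ∈ cs, Disjoint lbl (P o)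
  pairwise_separated : cs.Pairwise Separated

variable {W : V → Bool → ℝ}

theorem prod_map_weightedCount {L : List (PJT V)} (hL : L.Pairwise Separated) (τ : Finset V) :
    (L.map fun o => weightedCount W (clauses o) (P o) τ).prod
      = weightedCount W (L.map clauses).sum ((L.map P).foldr (· ∪ ·) ∅) τ := by
  induction L with
  | nil => exact (weightedCount_zero_empty τ).symm
  | cons a L ih =>
    obtain ⟨ha, hL⟩ := List.pairwise_cons.1 hL
    simp only [List.map_cons, List.prod_cons, List.sum_cons, List.foldr_cons]
    rw [ih hL, weightedCount_mul]
    · exact (Finset.disjoint_foldr_union_map_right _ _).2 fun b hb => (ha b hb).1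
    · exact fun c hc =>
        (Finset.disjoint_foldr_union_map_right _ _).2 fun b hb => (ha b hb).2.1 c hc
    · intro c hc
      obtain ⟨b, hb, hcb⟩ := (Multiset.mem_sum_map_list _ _).1 hc
      exact (ha b hb).2.2 c hcb

theorem val_eq_weightedCount {s : PJT V}
    (hs : ∀ lbl cs, Subtree (.node lbl cs) s → SeparatedNode lbl cs) {τ : Finset V}
    (hτ : Disjoint τ (P s)) : val W s τ = weightedCount W (clauses s) (P s) τ := by
  induction s using PJT.induction generalizing τ with
  | leaf c => rw [val_leaf, clauses_leaf, P_leaf, weightedCount_singleton_empty]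
  | node lbl cs ih =>
    obtain ⟨hlbl, hcs⟩ := hs lbl cs (.refl _)
    have hlblQ : Disjoint lbl ((cs.map P).foldr (· ∪ ·) ∅) :=
      (Finset.disjoint_foldr_union_map_right _ _).2 hlbl
    have hchild : ∀ σ ⊆ lbl, ∀ o ∈ cs,
        val W o ((τ ∪ σ) ∩ varsOf o) = weightedCount W (clauses o) (P o) (τ ∪ σ) := by
      intro σ hσ o ho
      have hτσ : Disjoint (τ ∪ σ) (P o) := Finset.disjoint_union_left.2
        ⟨hτ.mono_right (P_subset_of_mem ho), (hlbl o ho).mono_left hσ⟩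
      rw [ih o ho (fun l c hn => hs l c (hn.trans (.of_mem ho)))
        (hτσ.mono_left Finset.inter_subset_left)]
      refine weightedCount_congr fun c hc x hx => ?_
      rcases Finset.mem_union.1 (vars_subset_varsOf_union_P hc hx) with hxv | hxP
      · simp [hxv]
      · simp [Finset.disjoint_right.1 hτσ hxP]
    calc val W (.node lbl cs) τ
        = ∑ σ ∈ lbl.powerset,
            (cs.map fun o => weightedCount W (clauses o) (P o) (τ ∪ σ)).prod
              * wProd W lbl σ := by
          rw [val_node]
          refine Finset.sum_congr rfl fun σ hσ => ?_
          rw [List.map_congr_left (hchild σ (Finset.mem_powerset.1 hσ)),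
            wProd_union_of_disjoint_left W (hτ.mono_right (by simp [P_node]))]
      _ = ∑ σ ∈ lbl.powerset, weightedCount W (cs.map clauses).sum
            ((cs.map P).foldr (· ∪ ·) ∅) (τ ∪ σ) * wProd W lbl σ := by
          simp only [prod_map_weightedCount hcs]
      _ = weightedCount W (clauses (.node lbl cs)) (P (.node lbl cs)) τ := by
          rw [clauses_node, P_node, weightedCount_union hlblQ]

end PJT

namespace IsPJT

open PJT

variable {φ : Finset (Clause V)} {t : PJT V}

theorem disjoint_sup_of_add_le_labels (h : IsPJT φ t) {A B : Multiset (Finset V)}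
    (hAB : A + B ≤ labels t) : Disjoint A.sup B.sup :=
  Multiset.disjoint_sup_of_sum_card_le
    (by rw [h.disjoint_labels, ← h.cover, P_eq_sup_labels]) hAB

/-- A clause below `a` that mentioned a variable projected in `b` would, by `descend`, also lie
below `b`, so it would occur twice among the leaves. -/
theorem disjoint_vars_P (h : IsPJT φ t) {a b : PJT V} (hb : Subtree b t)
    (hab : clauses a + clauses b ≤ clauses t) {c : Clause V} (hc : c ∈ clauses a) :
    Disjoint c.vars (P b) := by
  rw [Finset.disjoint_right]
  intro x hxb hxc
  obtain ⟨lbl, cs, hsub, hxl⟩ := exists_subtree_of_mem_P hxb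
  have hnodup : (clauses a + clauses b).Nodup :=
    Multiset.nodup_of_le hab (h.clauses_eq ▸ φ.nodup)
  have hcφ : c ∈ φ := Multiset.mem_of_le (((Multiset.le_add_right _ _).trans hab).trans
    h.clauses_eq.le) hc
  have hcb : c ∈ clauses b :=
    Multiset.mem_of_le hsub.clauses_le (h.descend lbl cs (hsub.trans hb) c hcφ x hxl hxc)
  exact Multiset.disjoint_left.1 (Multiset.nodup_add.1 hnodup).2.2 hc hcb

theorem separatedNode (h : IsPJT φ t) {lbl : Finset V} {cs : List (PJT V)}
    (hn : Subtree (.node lbl cs) t) : SeparatedNode lbl cs where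
  disjoint_label o ho := by
    have hle : {lbl} + labels o ≤ labels t := by
      refine le_trans ?_ hn.labels_le
      rw [labels_node, Multiset.singleton_add]
      exact Multiset.cons_le_cons _ (List.le_sum_of_mem (List.mem_map_of_mem ho))
    simpa [← P_eq_sup_labels] using h.disjoint_sup_of_add_le_labels hle
  pairwise_separated := List.pairwise_iff_forall_sublist.2 fun {a b} hab => by
    have ha : Subtree a t := (Subtree.of_mem (hab.subset (by simp))).trans hn
    have hb : Subtree b t := (Subtree.of_mem (hab.subset (by simp))).trans hn
    have hlabels : labels a + labels b ≤ labels t := by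
      refine (Multiset.sum_map_add_le_of_sublist labels hab).trans (le_trans ?_ hn.labels_le)
      rw [labels_node]
      exact Multiset.le_cons_self _ _
    have hclauses : clauses a + clauses b ≤ clauses t := by
      refine (Multiset.sum_map_add_le_of_sublist clauses hab).trans (le_trans ?_ hn.clauses_le)
      rw [clauses_node]
    refine ⟨?_, fun c hc => h.disjoint_vars_P hb hclauses hc,
      fun c hc => h.disjoint_vars_P ha (add_comm (clauses a) _ ▸ hclauses) hc⟩
    simpa [← P_eq_sup_labels] using h.disjoint_sup_of_add_le_labels hlabels

end IsPJT

/-- Correctness of project-join tree evaluation: the root valuation at the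
empty assignment equals the weighted model count
`W(φ) = Σ_{τ ⊆ X} φ(τ)·W(τ)`. -/
theorem pjt_correct {V : Type*} [DecidableEq V]
    (φ : Finset (Clause V)) (t : PJT V) (h : IsPJT φ t) (W : V → Bool → ℝ) :
    t.val W ∅ = ∑ τ ∈ (Formula.vars φ).powerset,
      (∏ c ∈ φ, c.ind τ) * PJT.wProd W (Formula.vars φ) τ := by
  rw [PJT.val_eq_weightedCount (fun _ _ hn => h.separatedNode hn) (Finset.disjoint_empty_left _),
    h.clauses_eq, h.cover, PJT.weightedCount]
  simp only [Finset.empty_union, Finset.prod_eq_multiset_prod]
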